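/- Assume the Setup. Let L ∈ A and suppose there exists a nonzero D ∈ A with L·D = D·L₀. Then L satisfies condition (2), and there exists a k-subspace U ⊆ M satisfying condition (1) for L. -/

import Mathlib

/-- `adOp a b x = a*x - x*b`, the operator `ad_{a,b}`. -/
def adOp {A : Type*} [Ring A] (a b : A) : A → A := fun x => a * x - x * b

/-- The ad-nilpotency degree of `b` with respect to `L₀`:
the smallest `n` with `ad_{L₀}^[n+1] b = 0`. -/
noncomputable def degAd {A : Type*} [Ring A] (L₀ b : A) : ℕ :=
  sInf {n : ℕ | (adOp L₀ L₀)^[n + 1] b = 0}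

/-- Condition (2) of Theorem 4.4: `L = L₀` or `deg(L - L₀) < 0`, expressed via some `s' ∈ S`
with `s'(L - L₀)` a nonzero element of `B` of `ad_{L₀}`-degree smaller than that of `s'`. -/
def cond2 {k A : Type*} [CommSemiring k] [Ring A] [Algebra k A]
    (B : Subalgebra k A) (S : Set A) (L₀ L : A) : Prop :=
  L = L₀ ∨ ∃ s' ∈ S, s' * (L - L₀) ∈ B ∧ s' * (L - L₀) ≠ 0 ∧
    degAd L₀ (s' * (L - L₀)) < degAd L₀ s'

/-- A `k`-subspace of the `A`-module `M` (with `k` acting through `algebraMap k A`). -/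
def isSubspace (k A : Type*) {M : Type*} [CommSemiring k] [Ring A] [Algebra k A]
    [AddCommGroup M] [Module A M] (U : Set M) : Prop :=
  (0 : M) ∈ U ∧ (∀ u ∈ U, ∀ v ∈ U, u + v ∈ U) ∧
    (∀ c : k, ∀ u ∈ U, (algebraMap k A c) • u ∈ U)

/-!
Write `ε = L - L₀`. The relation `L D = D L₀` says `ε D = -ad_{L₀}(D)`; after clearing
denominators with `s₀ D, D q ∈ B` it becomes
`s₀ (s' ε) (D q) = s' (s₀ D) ad_{L₀}(q) - s' s₀ ad_{L₀}(D q)`. In characteristic zero the leading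
term of the Leibniz formula makes `deg_{L₀}` additive on nonzero elements of the domain, and
`ad_{L₀}` lowers it. So `ad_{L₀}^K` with `K = deg s' + deg s₀ + deg (D q)` kills the right-hand
side, while it kills the nonzero left-hand side only if `deg (s' ε) < deg s'`.

For the subspace, right multiplication by `D` intertwines `ad_{L₀,L}` with `ad_{L₀}`, so the
elements `ad_{L₀,L}^j(s₀)` vanish for large `j`. A common right denominator `v` puts all of them
into `B`, and then `x L = L₀ x - ad_{L₀,L}(x)` gives `s₀ Lⁿ v ∈ B` for every `n`. Hence
`U = {m | s₀ Lⁿ m ∈ U₀ for all n}` works with `s = s₀ v`.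
-/
open Finset

section AdOp

variable {A : Type*} [Ring A] (a : A)

def adOpAddHom : A →+ A :=
  AddMonoidHom.mk' (adOp a a) fun x y => by simp only [adOp]; noncomm_ring

theorem adOp_mul (x y : A) : adOp a a (x * y) = adOp a a x * y + x * adOp a a y := by
  simp only [adOp]; noncomm_ring

theorem iterate_adOp_zero (n : ℕ) : (adOp a a)^[n] 0 = 0 :=
  iterate_map_zero (adOpAddHom a) n

theorem iterate_adOp_sub (n : ℕ) (x y : A) :
    (adOp a a)^[n] (x - y) = (adOp a a)^[n] x - (adOp a a)^[n] y :=
  iterate_map_sub (adOpAddHom a) n x y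

theorem iterate_adOp_eq_zero_of_le {x : A} {m n : ℕ} (h : (adOp a a)^[m] x = 0) (hmn : m ≤ n) :
    (adOp a a)^[n] x = 0 := by
  rw [← Nat.sub_add_cancel hmn, Function.iterate_add_apply, h, iterate_adOp_zero]

theorem iterate_adOp_mul (x y : A) (n : ℕ) :
    (adOp a a)^[n] (x * y) =
      ∑ ij ∈ antidiagonal n, n.choose ij.1 • ((adOp a a)^[ij.1] x * (adOp a a)^[ij.2] y) := by
  induction n with
  | zero => simp
  | succ n ih =>
    rw [sum_antidiagonal_choose_succ_nsmul (fun i j => (adOp a a)^[i] x * (adOp a a)^[j] y) n,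
      Function.iterate_succ_apply', ih]
    change adOpAddHom a _ = _
    simp only [map_sum, map_nsmul]
    simp only [adOpAddHom, AddMonoidHom.mk'_apply, adOp_mul, nsmul_add, sum_add_distrib,
      ← Function.iterate_succ_apply' (adOp a a)]
    rw [add_comm, add_left_cancel_iff, sum_congr rfl]
    rintro ⟨i, j⟩ hij
    rw [HasAntidiagonal.mem_antidiagonal] at hij
    rw [Nat.choose_symm_of_eq_add hij.symm]

theorem iterate_adOp_mul_eq_zero {x y : A} {m n : ℕ} (hx : (adOp a a)^[m + 1] x = 0)
    (hy : (adOp a a)^[n] y = 0) : (adOp a a)^[m + n] (x * y) = 0 := by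
  rw [iterate_adOp_mul]
  refine sum_eq_zero fun ij hij => ?_
  rw [HasAntidiagonal.mem_antidiagonal] at hij
  rcases Nat.lt_or_ge m ij.1 with hi | hj
  · rw [iterate_adOp_eq_zero_of_le a hx hi, zero_mul, smul_zero]
  · rw [iterate_adOp_eq_zero_of_le a hy (by omega), mul_zero, smul_zero]

theorem iterate_adOp_mul_eq {x y : A} {m n : ℕ} (hx : (adOp a a)^[m + 1] x = 0)
    (hy : (adOp a a)^[n + 1] y = 0) :
    (adOp a a)^[m + n] (x * y) = (m + n).choose m • ((adOp a a)^[m] x * (adOp a a)^[n] y) := by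
  rw [iterate_adOp_mul]
  refine sum_eq_single (m, n) (fun ij hij hne => ?_) (by simp)
  rw [HasAntidiagonal.mem_antidiagonal] at hij
  rcases Nat.lt_or_ge m ij.1 with hi | hj
  · rw [iterate_adOp_eq_zero_of_le a hx hi, zero_mul, smul_zero]
  · have hj : n + 1 ≤ ij.2 := by
      by_contra
      exact hne (Prod.ext (by omega) (by omega))
    rw [iterate_adOp_eq_zero_of_le a hy hj, mul_zero, smul_zero]

theorem degAd_le {x : A} {n : ℕ} (h : (adOp a a)^[n + 1] x = 0) : degAd a x ≤ n :=
  Nat.sInf_le h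

theorem degAd_lt {x : A} {n : ℕ} (hx : x ≠ 0) (h : (adOp a a)^[n] x = 0) : degAd a x < n := by
  obtain _ | n := n
  · exact absurd h hx
  · exact Nat.lt_succ_of_le (degAd_le a h)

theorem iterate_degAd_succ {x : A} (hx : ∃ n, (adOp a a)^[n] x = 0) :
    (adOp a a)^[degAd a x + 1] x = 0 := by
  obtain ⟨n, hn⟩ := hx
  exact Nat.sInf_mem (s := {n | (adOp a a)^[n + 1] x = 0})
    ⟨n, iterate_adOp_eq_zero_of_le a hn n.le_succ⟩

theorem le_degAd {x : A} {n : ℕ} (hx : ∃ n, (adOp a a)^[n] x = 0)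
    (h : (adOp a a)^[n] x ≠ 0) : n ≤ degAd a x := by
  by_contra! hlt
  exact h (iterate_adOp_eq_zero_of_le a (iterate_degAd_succ a hx) hlt)

theorem iterate_degAd_ne_zero {x : A} (hx : x ≠ 0) : (adOp a a)^[degAd a x] x ≠ 0 :=
  fun h => (degAd_lt a hx h).false

theorem degAd_mul [IsDomain A] [CharZero A] {x y : A} (hx0 : x ≠ 0) (hy0 : y ≠ 0)
    (hx : ∃ n, (adOp a a)^[n] x = 0) (hy : ∃ n, (adOp a a)^[n] y = 0) :
    degAd a (x * y) = degAd a x + degAd a y := by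
  have hx' := iterate_degAd_succ a hx
  have hy' := iterate_degAd_succ a hy
  refine le_antisymm (degAd_le a ?_) (le_degAd a ⟨_, iterate_adOp_mul_eq_zero a hx' hy'⟩ ?_)
  · rw [add_assoc]
    exact iterate_adOp_mul_eq_zero a hx' hy'
  · rw [iterate_adOp_mul_eq a hx' hy']
    exact smul_ne_zero (Nat.choose_pos (Nat.le_add_right _ _)).ne'
      (mul_ne_zero (iterate_degAd_ne_zero a hx0) (iterate_degAd_ne_zero a hy0))

theorem iterate_adOp_mul_adOp_eq_zero {x y : A} (hx : ∃ n, (adOp a a)^[n] x = 0)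
    (hy : ∃ n, (adOp a a)^[n] y = 0) :
    (adOp a a)^[degAd a x + degAd a y] (x * adOp a a y) = 0 :=
  iterate_adOp_mul_eq_zero a (iterate_degAd_succ a hx)
    (by rw [← Function.iterate_succ_apply]; exact iterate_degAd_succ a hy)

end AdOp

section Denominators

variable {k A : Type*} [CommRing k] [Ring A] [Algebra k A] {B : Subalgebra k A} {S : Set A}

theorem cond2_of_mul_eq_mul [IsDomain A] [CharZero A] (hSB : S ⊆ B) (hS0 : (0 : A) ∉ S)
    (hScomm : ∀ s ∈ S, ∀ t ∈ S, s * t = t * s)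
    (hleft : ∀ a : A, ∃ s ∈ S, s * a ∈ B) (hright : ∀ a : A, ∃ s ∈ S, a * s ∈ B)
    {L₀ : A} (hnil : ∀ b ∈ B, ∃ n : ℕ, (adOp L₀ L₀)^[n] b = 0)
    {L D : A} (hD : D ≠ 0) (hLD : L * D = D * L₀) : cond2 B S L₀ L := by
  rcases eq_or_ne L L₀ with hL | hL
  · exact Or.inl hL
  have hS_ne : ∀ s ∈ S, s ≠ 0 := fun s hs h => hS0 (h ▸ hs)
  obtain ⟨s', hs', hs'ε⟩ := hleft (L - L₀)
  obtain ⟨s₀, hs₀, hs₀D⟩ := hleft D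
  obtain ⟨q, hq, hDq⟩ := hright D
  have hs'0 := hS_ne s' hs'
  have hs₀0 := hS_ne s₀ hs₀
  have hε : s' * (L - L₀) ≠ 0 := mul_ne_zero hs'0 (sub_ne_zero.2 hL)
  refine Or.inr ⟨s', hs', hs'ε, hε, ?_⟩
  have key : s₀ * (s' * (L - L₀)) * (D * q) =
      s' * (s₀ * D) * adOp L₀ L₀ q - s' * s₀ * adOp L₀ L₀ (D * q) := by
    calc s₀ * (s' * (L - L₀)) * (D * q)
        = s' * s₀ * (L * D) * q - s' * s₀ * (L₀ * D) * q := by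
          rw [← mul_assoc s₀, hScomm s₀ hs₀ s' hs']; noncomm_ring
      _ = _ := by rw [hLD]; simp only [adOp]; noncomm_ring
  have hDq0 : D * q ≠ 0 := mul_ne_zero hD (hS_ne q hq)
  have hs'B := hSB hs'
  have hs₀B := hSB hs₀
  have hK₁ : degAd L₀ (s' * (s₀ * D)) + degAd L₀ q = degAd L₀ (s' * s₀ * (D * q)) := by
    rw [← degAd_mul L₀ (mul_ne_zero hs'0 (mul_ne_zero hs₀0 hD)) (hS_ne q hq)
      (hnil _ (mul_mem hs'B hs₀D)) (hnil _ (hSB hq))]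
    simp only [mul_assoc]
  have hK₂ : degAd L₀ (s' * s₀ * (D * q)) = degAd L₀ s' + degAd L₀ s₀ + degAd L₀ (D * q) := by
    rw [degAd_mul L₀ (mul_ne_zero hs'0 hs₀0) hDq0 (hnil _ (mul_mem hs'B hs₀B)) (hnil _ hDq),
      degAd_mul L₀ hs'0 hs₀0 (hnil _ hs'B) (hnil _ hs₀B)]
  have h₁ := iterate_adOp_mul_adOp_eq_zero L₀ (hnil _ (mul_mem hs'B hs₀D)) (hnil _ (hSB hq))
  have h₂ := iterate_adOp_mul_adOp_eq_zero L₀ (hnil _ (mul_mem hs'B hs₀B)) (hnil _ hDq)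
  rw [hK₁] at h₁
  rw [degAd_mul L₀ hs'0 hs₀0 (hnil _ hs'B) (hnil _ hs₀B), ← hK₂] at h₂
  have hlt := degAd_lt L₀ (mul_ne_zero (mul_ne_zero hs₀0 hε) hDq0)
    (by rw [key, iterate_adOp_sub, h₁, h₂, sub_zero])
  rw [degAd_mul L₀ (mul_ne_zero hs₀0 hε) hDq0 (hnil _ (mul_mem hs₀B hs'ε)) (hnil _ hDq),
    degAd_mul L₀ hs₀0 hε (hnil _ hs₀B) (hnil _ hs'ε), hK₂] at hlt
  omega

theorem exists_mem_forall_mul_mem (hSB : S ⊆ B) (hS1 : (1 : A) ∈ S)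
    (hSmul : ∀ s ∈ S, ∀ t ∈ S, s * t ∈ S) (hright : ∀ a : A, ∃ s ∈ S, a * s ∈ B)
    (F : Finset A) : ∃ v ∈ S, ∀ x ∈ F, x * v ∈ B := by
  classical
  induction F using Finset.induction_on with
  | empty => exact ⟨1, hS1, by simp⟩
  | insert x F _ ih =>
    obtain ⟨v, hv, hvF⟩ := ih
    obtain ⟨w, hw, hxvw⟩ := hright (x * v)
    refine ⟨v * w, hSmul v hv w hw, ?_⟩
    simp only [Finset.mem_insert, forall_eq_or_imp, ← mul_assoc]
    exact ⟨hxvw, fun y hy => mul_mem (hvF y hy) (hSB hw)⟩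

theorem semiconj_mul_right_adOp {a L L₀ D : A} (hLD : L * D = D * L₀) :
    Function.Semiconj (· * D) (adOp a L) (adOp a L₀) := fun x => by
  simp only [adOp]
  rw [mul_assoc x D, ← hLD]
  noncomm_ring

theorem mul_pow_mul_mem {L₀ L s v : A} (hL₀ : L₀ ∈ B)
    (h : ∀ j, (adOp L₀ L)^[j] s * v ∈ B) (n : ℕ) : s * L ^ n * v ∈ B := by
  suffices ∀ n j, (adOp L₀ L)^[j] s * L ^ n * v ∈ B from this n 0
  intro n
  induction n with
  | zero => simpa using h
  | succ n ih =>
    intro j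
    have : (adOp L₀ L)^[j] s * L ^ (n + 1) * v =
        L₀ * ((adOp L₀ L)^[j] s * L ^ n * v) - (adOp L₀ L)^[j + 1] s * L ^ n * v := by
      rw [Function.iterate_succ_apply', pow_succ']
      simp only [adOp]
      noncomm_ring
    rw [this]
    exact sub_mem (mul_mem hL₀ (ih j)) (ih (j + 1))

theorem exists_mul_pow_mul_mem [IsDomain A] (hSB : S ⊆ B) (hS1 : (1 : A) ∈ S)
    (hSmul : ∀ s ∈ S, ∀ t ∈ S, s * t ∈ S)
    (hleft : ∀ a : A, ∃ s ∈ S, s * a ∈ B) (hright : ∀ a : A, ∃ s ∈ S, a * s ∈ B)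
    {L₀ : A} (hL₀ : L₀ ∈ B) (hnil : ∀ b ∈ B, ∃ n : ℕ, (adOp L₀ L₀)^[n] b = 0)
    {L D : A} (hD : D ≠ 0) (hLD : L * D = D * L₀) :
    ∃ s ∈ S, ∃ v ∈ S, ∀ n, s * L ^ n * v ∈ B := by
  classical
  obtain ⟨s, hs, hsD⟩ := hleft D
  obtain ⟨N, hN⟩ := hnil _ hsD
  obtain ⟨v, hv, hvN⟩ := exists_mem_forall_mul_mem hSB hS1 hSmul hright
    ((Finset.range N).image fun j => (adOp L₀ L)^[j] s)
  refine ⟨s, hs, v, hv, mul_pow_mul_mem hL₀ fun j => ?_⟩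
  rcases Nat.lt_or_ge j N with hj | hj
  · exact hvN _ (Finset.mem_image_of_mem _ (Finset.mem_range.2 hj))
  · have : (adOp L₀ L)^[j] s * D = 0 :=
      ((semiconj_mul_right_adOp hLD).iterate_right j s).trans
        (iterate_adOp_eq_zero_of_le L₀ hN hj)
    rw [(mul_eq_zero.1 this).resolve_right hD, zero_mul]
    exact zero_mem B

end Denominators

theorem exists_isSubspace_of_mul_pow_mul_mem {k A M : Type*} [CommSemiring k] [Ring A]
    [Algebra k A] [AddCommGroup M] [Module A M] {B R : Subalgebra k A} {U₀ : Set M}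
    (hU₀0 : (0 : M) ∈ U₀) (hU₀add : ∀ u ∈ U₀, ∀ v ∈ U₀, u + v ∈ U₀)
    (hU₀R : ∀ r ∈ (R : Set A), ∀ u ∈ U₀, r • u ∈ U₀) (hB : ∀ a ∈ B, ∀ u ∈ U₀, a • u ∈ U₀)
    {L s v : A} (hs : s ∈ R) (hv : v ∈ R) (hsv : s * v = v * s)
    (h : ∀ n, s * L ^ n * v ∈ B) :
    ∃ U : Set M, isSubspace k A U ∧ (∀ u ∈ U, L • u ∈ U) ∧
      (∀ u ∈ U₀, (s * v) • u ∈ U) ∧ (∀ u ∈ U, (s * v) • u ∈ U₀) := by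
  refine ⟨{m | ∀ n : ℕ, (s * L ^ n) • m ∈ U₀}, ⟨fun n => ?_, fun x hx y hy n => ?_,
    fun c x hx n => ?_⟩, fun x hx n => ?_, fun u hu n => ?_, fun x hx => ?_⟩
  · simpa using hU₀0
  · simpa using hU₀add _ (hx n) _ (hy n)
  · rw [smul_smul, ← Algebra.commutes, ← smul_smul]
    exact hU₀R _ (R.algebraMap_mem c) _ (hx n)
  · simpa [smul_smul, mul_assoc, pow_succ] using hx (n + 1)
  · rw [smul_smul, hsv, ← mul_assoc, ← smul_smul]
    exact hB _ (h n) _ (hU₀R s hs u hu)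
  · rw [hsv, ← smul_smul]
    exact hU₀R v hv _ (by simpa using hx 0)

theorem stmt5_general
    {k A M : Type*} [Field k] [CharZero k] [Ring A] [IsDomain A] [Algebra k A]
    [AddCommGroup M] [Module A M]
    (B R : Subalgebra k A) (hRB : R ≤ B)
    (hRcomm : ∀ x ∈ R, ∀ y ∈ R, x * y = y * x)
    (S : Set A) (hSR : S ⊆ (R : Set A)) (hS0 : (0 : A) ∉ S) (hS1 : (1 : A) ∈ S)
    (hSmul : ∀ s ∈ S, ∀ t ∈ S, s * t ∈ S)
    (hleft : ∀ a : A, ∃ s ∈ S, s * a ∈ B)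
    (hright : ∀ a : A, ∃ s ∈ S, a * s ∈ B)
    (U₀ : Set M) (hU₀0 : (0 : M) ∈ U₀)
    (hU₀add : ∀ u ∈ U₀, ∀ v ∈ U₀, u + v ∈ U₀)
    (hU₀R : ∀ r ∈ (R : Set A), ∀ u ∈ U₀, r • u ∈ U₀)
    (hB : ∀ a : A, a ∈ B ↔ ∀ u ∈ U₀, a • u ∈ U₀)
    (L₀ : A) (hL₀ : L₀ ∈ B)
    (hnil : ∀ b ∈ B, ∃ n : ℕ, (adOp L₀ L₀)^[n] b = 0)
    (L : A) (D : A) (hD : D ≠ 0) (hLD : L * D = D * L₀) :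
    cond2 B S L₀ L ∧
    ∃ U : Set M, isSubspace k A U ∧
      (∀ u ∈ U, L • u ∈ U) ∧
      ∃ s ∈ S, (∀ u ∈ U₀, s • u ∈ U) ∧ (∀ u ∈ U, s • u ∈ U₀) := by
  have : CharZero A := charZero_of_injective_algebraMap (algebraMap k A).injective
  have hSB : S ⊆ B := fun s hs => hRB (hSR hs)
  have hScomm : ∀ s ∈ S, ∀ t ∈ S, s * t = t * s := fun s hs t ht => hRcomm s (hSR hs) t (hSR ht)
  obtain ⟨s, hs, v, hv, hsLv⟩ :=
    exists_mul_pow_mul_mem hSB hS1 hSmul hleft hright hL₀ hnil hD hLD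
  obtain ⟨U, hU, hLU, hU₀U, hUU₀⟩ := exists_isSubspace_of_mul_pow_mul_mem hU₀0 hU₀add hU₀R
    (fun a ha => (hB a).1 ha) (hSR hs) (hSR hv) (hScomm s hs v hv) hsLv
  exact ⟨cond2_of_mul_eq_mul hSB hS0 hScomm hleft hright hnil hD hLD,
    U, hU, hLU, s * v, hSmul s hs v hv, hU₀U, hUU₀⟩

/-- Necessity part of Theorem 4.4: if there is a nonzero `D ∈ A` with `L·D = D·L₀`, then `L`
satisfies condition (2) and there is a `k`-subspace `U ⊆ M` satisfying condition (1) for `L`. -/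
theorem stmt5
    {k A M : Type*} [Field k] [CharZero k] [Ring A] [IsDomain A] [Algebra k A]
    [AddCommGroup M] [Module A M]
    (B R : Subalgebra k A) (hRB : R ≤ B)
    (hRcomm : ∀ x ∈ R, ∀ y ∈ R, x * y = y * x)
    (S : Set A) (hSR : S ⊆ (R : Set A)) (hS0 : (0 : A) ∉ S) (hS1 : (1 : A) ∈ S)
    (hSmul : ∀ s ∈ S, ∀ t ∈ S, s * t ∈ S)
    (hSunit : ∀ s ∈ S, IsUnit s)
    (hleft : ∀ a : A, ∃ s ∈ S, s * a ∈ B)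
    (hright : ∀ a : A, ∃ s ∈ S, a * s ∈ B)
    (U₀ : Set M) (hU₀0 : (0 : M) ∈ U₀)
    (hU₀add : ∀ u ∈ U₀, ∀ v ∈ U₀, u + v ∈ U₀)
    (hU₀neg : ∀ u ∈ U₀, -u ∈ U₀)
    (hU₀R : ∀ r ∈ (R : Set A), ∀ u ∈ U₀, r • u ∈ U₀)
    (hB : ∀ a : A, a ∈ B ↔ ∀ u ∈ U₀, a • u ∈ U₀)
    (L₀ : A) (hL₀ : L₀ ∈ B)
    (hnil : ∀ b ∈ B, ∃ n : ℕ, (adOp L₀ L₀)^[n] b = 0)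
    (L : A) (D : A) (hD : D ≠ 0) (hLD : L * D = D * L₀) :
    cond2 B S L₀ L ∧
    ∃ U : Set M, isSubspace k A U ∧
      (∀ u ∈ U, L • u ∈ U) ∧
      ∃ s ∈ S, (∀ u ∈ U₀, s • u ∈ U) ∧ (∀ u ∈ U, s • u ∈ U₀) :=
  stmt5_general B R hRB hRcomm S hSR hS0 hS1 hSmul hleft hright U₀ hU₀0 hU₀add hU₀R hB L₀ hL₀ hnil L
    D hD hLD
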